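/- arXiv:0711.0477 — 7 statements merged into one kernel-verified Lean document; each statement's English description precedes it below -/
import Mathlib

section
/- For every integer n ≥ 1, the Bost–Connes map ρₙ on the group algebra A = ℚ[ℚ/ℤ] is multiplicative: ρₙ(x·y) = ρₙ(x)·ρₙ(y) for all x, y ∈ A. (Together with its ℚ-linearity this makes ρₙ a non-unital ℚ-algebra endomorphism of A.) -/
/-!
The fibre of `n • ·` over `n • s` is the coset `s + K` of the `n`-torsion subgroup `K` of `ℚ/ℤ`,
which has exactly `n` elements. With `χ = ∑_{k ∈ K} e_k` this reads `ρₙ(e_{n•s}) = n⁻¹ e_s χ`, and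
since `e_k χ = χ` for `k ∈ K` we get `χ² = n χ`, whence
`ρₙ(e_{n•s}) ρₙ(e_{n•t}) = n⁻² e_{s+t} χ² = ρₙ(e_{n•(s+t)})`. Both sides of `ρₙ(xy) = ρₙ(x) ρₙ(y)`
are bilinear, so the basis case suffices.
-/

open AddMonoidAlgebra

/-- The rational group algebra `A = ℚ[ℚ/ℤ]` of `ℚ/ℤ = AddCircle (1 : ℚ)`. -/
abbrev BC.A : Type := AddMonoidAlgebra ℚ (AddCircle (1 : ℚ))

/-- The Bost–Connes map `ρₙ : A → A`, the `ℚ`-linear map determined on the canonical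
basis elements `e_r = single r 1` by `ρₙ(e_r) = (1/n) ∑_{s : n • s = r} e_s`, the
(finite) sum running over the `n` solutions `s ∈ ℚ/ℤ` of `n • s = r`. -/
noncomputable def BC.rho (n : ℕ) : BC.A →ₗ[ℚ] BC.A :=
  (Finsupp.lift BC.A ℚ (AddCircle (1 : ℚ)) fun r =>
    (n : ℚ)⁻¹ • ∑ᶠ (s : AddCircle (1 : ℚ)) (_ : n • s = r), AddMonoidAlgebra.single s (1 : ℚ)) ∘ₗ
    (AddMonoidAlgebra.coeffLinearEquiv ℚ).toLinearMap

namespace AddCircle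

lemma nsmul_surjective {𝕜 : Type*} [Field 𝕜] [CharZero 𝕜] (p : 𝕜) {n : ℕ} (hn : n ≠ 0) :
    Function.Surjective fun u : AddCircle p => n • u := by
  intro u
  induction u using QuotientAddGroup.induction_on with | H x =>
  refine ⟨((x / n : 𝕜) : AddCircle p), ?_⟩
  change n • ((x / n : 𝕜) : AddCircle p) = x
  rw [← coe_nsmul, nsmul_eq_mul, mul_div_cancel₀ _ (Nat.cast_ne_zero.mpr hn)]

variable {𝕜 : Type*} [Field 𝕜] [LinearOrder 𝕜] [IsStrictOrderedRing 𝕜] {p : 𝕜} [Fact (0 < p)]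

lemma ker_nsmul_eq_zmultiples {n : ℕ} (hn : 0 < n) :
    (nsmulAddMonoidHom n : AddCircle p →+ AddCircle p).ker =
      AddSubgroup.zmultiples ((p / n : 𝕜) : AddCircle p) := by
  refine le_antisymm (fun u hu => ?_) (AddSubgroup.zmultiples_le.mpr ?_)
  · obtain ⟨m, -, rfl⟩ := (AddCircle.nsmul_eq_zero_iff hn).mp hu
    rw [natCast_div_mul_eq_nsmul p]
    exact AddSubgroup.nsmul_mem _ (AddSubgroup.mem_zmultiples _) m
  · simpa [addOrderOf_period_div hn] using addOrderOf_nsmul_eq_zero ((p / n : 𝕜) : AddCircle p)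

lemma card_ker_nsmul {n : ℕ} (hn : 0 < n) :
    Nat.card (nsmulAddMonoidHom n : AddCircle p →+ AddCircle p).ker = n := by
  rw [ker_nsmul_eq_zmultiples hn, Nat.card_zmultiples, addOrderOf_period_div hn]

end AddCircle

namespace BC

section SubgroupSum

variable {k G : Type*} [Semiring k] [AddGroup G]

noncomputable def subgroupSum (K : AddSubgroup G) [Fintype K] : k[G] :=
  ∑ a : K, single (a : G) 1

variable {K : AddSubgroup G} [Fintype K]

lemma single_one_mul_subgroupSum {g : G} (hg : g ∈ K) :
    single g (1 : k) * subgroupSum K = subgroupSum K := by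
  simp only [subgroupSum, Finset.mul_sum, single_mul_single, one_mul]
  exact Fintype.sum_equiv (Equiv.addLeft ⟨g, hg⟩) _ _ fun _ => rfl

lemma subgroupSum_mul_self :
    (subgroupSum K : k[G]) * subgroupSum K = Nat.card K • subgroupSum K :=
  calc (subgroupSum K : k[G]) * subgroupSum K = ∑ a : K, single (a : G) 1 * subgroupSum K :=
        Finset.sum_mul ..
    _ = ∑ _a : K, subgroupSum K := Finset.sum_congr rfl fun a _ => single_one_mul_subgroupSum a.2
    _ = Nat.card K • subgroupSum K := by
        rw [Finset.sum_const, Finset.card_univ, Nat.card_eq_fintype_card]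

lemma finsum_single_fiber {H : Type*} [AddGroup H] (φ : G →+ H) [Fintype φ.ker] (g₀ : G) :
    ∑ᶠ (g : G) (_ : φ g = φ g₀), single g (1 : k) = single g₀ 1 * subgroupSum φ.ker := by
  have hfiber : {g | φ g = φ g₀} = (g₀ + ·) '' (φ.ker : Set G) := by
    ext g
    rw [Set.image_add_left, Set.mem_preimage, SetLike.mem_coe, AddMonoidHom.mem_ker, map_add,
      map_neg, neg_add_eq_zero, eq_comm, Set.mem_ofPred_eq]
  calc ∑ᶠ (g : G) (_ : φ g = φ g₀), single g (1 : k)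
      = ∑ᶠ g ∈ (g₀ + ·) '' (φ.ker : Set G), single g (1 : k) := by rw [← hfiber]; rfl
    _ = ∑ᶠ a ∈ (φ.ker : Set G), single (g₀ + a) (1 : k) :=
        finsum_mem_image (add_right_injective g₀).injOn
    _ = ∑ a : φ.ker, single (g₀ + a) (1 : k) := by
        rw [← finsum_set_coe_eq_finsum_mem, finsum_eq_sum_of_fintype]; rfl
    _ = single g₀ 1 * subgroupSum φ.ker := by
        simp only [subgroupSum, Finset.mul_sum, single_mul_single, one_mul]

end SubgroupSum

local notation "Q" => AddCircle (1 : ℚ)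

lemma rho_single_one (n : ℕ) (r : Q) :
    rho n (single r 1) = (n : ℚ)⁻¹ • ∑ᶠ (s : Q) (_ : n • s = r), single s (1 : ℚ) := by
  simp [rho]

lemma rho_single_nsmul (n : ℕ) [Fintype (nsmulAddMonoidHom n : Q →+ Q).ker] (s : Q) :
    rho n (single (n • s) 1) =
      (n : ℚ)⁻¹ • (single s 1 * subgroupSum (nsmulAddMonoidHom n).ker) := by
  rw [rho_single_one]
  exact congrArg _ (finsum_single_fiber (nsmulAddMonoidHom n) s)

lemma rho_single_mul_single {n : ℕ} (hn : 0 < n) [Fintype (nsmulAddMonoidHom n : Q →+ Q).ker]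
    (r r' : Q) :
    rho n (single r 1 * single r' 1) = rho n (single r 1) * rho n (single r' 1) := by
  obtain ⟨s, rfl⟩ := AddCircle.nsmul_surjective (1 : ℚ) hn.ne' r
  obtain ⟨t, rfl⟩ := AddCircle.nsmul_surjective (1 : ℚ) hn.ne' r'
  set χ : A := subgroupSum (nsmulAddMonoidHom n : Q →+ Q).ker
  have hχ : χ * χ = (n : ℚ) • χ := by
    rw [subgroupSum_mul_self, AddCircle.card_ker_nsmul hn, Nat.cast_smul_eq_nsmul]
  simp only [single_mul_single, one_mul, ← smul_add, rho_single_nsmul]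
  rw [smul_mul_smul_comm, mul_mul_mul_comm, single_mul_single, one_mul, hχ, mul_smul_comm,
    smul_smul, inv_mul_cancel_right₀ (Nat.cast_ne_zero.mpr hn.ne')]

end BC

/-- For every `n ≥ 1`, the Bost–Connes map `ρₙ` on `ℚ[ℚ/ℤ]` is multiplicative. -/
theorem BC.rho_mul (n : ℕ) (hn : 1 ≤ n) (x y : BC.A) :
    BC.rho n (x * y) = BC.rho n x * BC.rho n y := by
  have : Finite (nsmulAddMonoidHom n : AddCircle (1 : ℚ) →+ _).ker :=
    Nat.finite_of_card_ne_zero (by rw [AddCircle.card_ker_nsmul hn]; omega)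
  have := Fintype.ofFinite (nsmulAddMonoidHom n : AddCircle (1 : ℚ) →+ _).ker
  have hmul : (LinearMap.mul ℚ BC.A).compr₂ (BC.rho n) =
      (LinearMap.mul ℚ BC.A).compl₁₂ (BC.rho n) (BC.rho n) := by
    ext r r' : 4
    simpa using BC.rho_single_mul_single hn r r'
  exact LinearMap.congr_fun₂ hmul x y
end

section
/- For all integers n, m ≥ 1, the Bost–Connes maps on the group algebra A = ℚ[ℚ/ℤ] satisfy ρₙ ∘ ρₘ = ρ_{nm}; in particular (ρₙ)_{n≥1} defines an action of the multiplicative semigroup ℕ^× on A by (non-unital) algebra endomorphisms. -/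
open AddMonoidAlgebra

/-! The fibre of `(n * m) •` over `r` is the disjoint union, over the `m`-th division points `s`
of `r`, of the `n`-th division points of `s`. All these fibres are finite because `ℚ/ℤ` has finite
`n`-torsion, so the sum defining `ρₙ (ρₘ e_r)` can be regrouped into the one defining
`ρₙₘ e_r`. -/

theorem finsum_mem_fiberwise {α β M : Type*} [AddCommMonoid M] (g : α → β) {s : Set β}
    (hs : s.Finite) (hg : ∀ b ∈ s, (g ⁻¹' {b}).Finite) (f : α → M) :
    ∑ᶠ b ∈ s, ∑ᶠ a ∈ g ⁻¹' {b}, f a = ∑ᶠ a ∈ g ⁻¹' s, f a := by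
  rw [← finsum_mem_biUnion (Set.pairwiseDisjoint_fiber g s) hs hg, Set.biUnion_preimage_singleton]

theorem finite_preimage_nsmul_singleton {G : Type*} [AddCommGroup G] {n : ℕ}
    (h : ((n • ·) ⁻¹' {0} : Set G).Finite) (r : G) : ((n • ·) ⁻¹' {r} : Set G).Finite := by
  rcases ((n • ·) ⁻¹' {r} : Set G).eq_empty_or_nonempty with hr | ⟨s₀, hs₀⟩
  · simp [hr]
  · refine (h.image (· + s₀)).subset fun s hs => ⟨s - s₀, ?_, sub_add_cancel s s₀⟩
    simp_all [smul_sub]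

namespace BC

theorem finite_preimage_nsmul {n : ℕ} (hn : 0 < n) (r : AddCircle (1 : ℚ)) :
    ((n • ·) ⁻¹' {r} : Set (AddCircle (1 : ℚ))).Finite :=
  finite_preimage_nsmul_singleton (AddCircle.finite_torsion 1 hn) r

theorem rho_single (n : ℕ) (r : AddCircle (1 : ℚ)) :
    rho n (single r 1) = (n : ℚ)⁻¹ • ∑ᶠ s ∈ (n • ·) ⁻¹' {r}, single s (1 : ℚ) := by
  simp [rho]

end BC

/-- For all `n, m ≥ 1`, the Bost–Connes maps on `ℚ[ℚ/ℤ]` satisfy `ρₙ ∘ ρₘ = ρₙₘ`. -/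
theorem BC.rho_comp (n m : ℕ) (hn : 1 ≤ n) (hm : 1 ≤ m) :
    (BC.rho n).comp (BC.rho m) = BC.rho (n * m) := by
  refine lhom_ext' fun r => LinearMap.ext_ring ?_
  have hfm := finite_preimage_nsmul hm r
  have hfib : (n • ·) ⁻¹' ((m • ·) ⁻¹' {r}) =
      ((n * m) • ·) ⁻¹' ({r} : Set (AddCircle (1 : ℚ))) := by
    ext t
    simp [mul_comm n, mul_smul]
  calc rho n (rho m (single r 1))
      = (m : ℚ)⁻¹ • ∑ᶠ s ∈ (m • ·) ⁻¹' {r}, rho n (single s 1) := by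
        rw [rho_single, map_smul]
        exact congrArg _ ((rho n).toAddMonoidHom.map_finsum_mem _ hfm)
    _ = ((m : ℚ)⁻¹ * (n : ℚ)⁻¹) •
          ∑ᶠ s ∈ (m • ·) ⁻¹' {r}, ∑ᶠ t ∈ (n • ·) ⁻¹' {s}, single t (1 : ℚ) := by
        simp_rw [rho_single, ← smul_finsum_mem hfm, smul_smul]
    _ = rho (n * m) (single r 1) := by
        rw [finsum_mem_fiberwise _ hfm fun s _ => finite_preimage_nsmul hn s, hfib, rho_single]
        push_cast
        rw [mul_inv, mul_comm]
end

section
/- For every integer n ≥ 1, the Bost–Connes map ρₙ : A → A on the group algebra A = ℚ[ℚ/ℤ] is injective. -/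
open AddMonoidAlgebra

/-! Coefficientwise, `(ρₙ f)(s) = f(n • s) / n`: the fibres of multiplication by `n` on `ℚ/ℤ`
are finite, being cosets of the `n`-torsion, so the `finsum` in the definition of `ρₙ` is a
genuine sum. As `ℚ/ℤ` is divisible, every coefficient of `f` is of the form `f(n • s)` and is
thus read off from `ρₙ f`. -/

theorem surjective_nsmul_of_divisibleBy_int {G : Type*} [AddCommGroup G] [DivisibleBy G ℤ]
    {n : ℕ} (hn : n ≠ 0) : Function.Surjective fun s : G => n • s := by
  simpa only [natCast_zsmul] using DivisibleBy.surjective_smul G ℤ (Int.natCast_ne_zero.mpr hn)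

theorem finite_setOf_nsmul_eq {G : Type*} [AddCommGroup G] {n : ℕ}
    (h : {u : G | n • u = 0}.Finite) (r : G) : {s : G | n • s = r}.Finite := by
  rcases Set.eq_empty_or_nonempty {s : G | n • s = r} with hr | ⟨s₀, hs₀⟩
  · simp [hr]
  · refine (h.preimage (sub_left_injective (b := s₀)).injOn).subset fun s hs => ?_
    simp_all [smul_sub]

theorem AddMonoidAlgebra.coeff_finsum_single_one {G k : Type*} [AddMonoid G] [Semiring k]
    {p : G → Prop} (hp : {s | p s}.Finite) (t : G) [Decidable (p t)] :
    (∑ᶠ (s : G) (_ : p s), single s (1 : k)).coeff t = if p t then 1 else 0 := by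
  classical
  rw [finsum_cond_eq_sum_of_cond_iff _ (t := hp.toFinset) fun _ => by simp]
  simp only [coeff_sum, Finsupp.finsetSum_apply, coeff_single, Finsupp.single_apply,
    Finset.sum_ite_eq', Set.Finite.mem_toFinset, Set.mem_ofPred_eq]

theorem BC.coeff_rho {n : ℕ} (hn : n ≠ 0) (f : BC.A) (s : AddCircle (1 : ℚ)) :
    (BC.rho n f).coeff s = (n : ℚ)⁻¹ * f.coeff (n • s) := by
  induction f using AddMonoidAlgebra.induction_linear with
  | zero => simp
  | add f g hf hg => simp [hf, hg, mul_add]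
  | single r a =>
    have hfibre :=
      finite_setOf_nsmul_eq (AddCircle.finite_torsion (1 : ℚ) (Nat.pos_of_ne_zero hn)) r
    simp only [BC.rho, LinearMap.coe_comp, Function.comp_apply, LinearEquiv.coe_coe,
      coeffLinearEquiv_apply, coeff_single, Finsupp.lift_apply, Finsupp.sum_single_index,
      zero_smul, coeff_smul, Finsupp.smul_apply, coeff_finsum_single_one hfibre, smul_eq_mul,
      Finsupp.single_apply]
    obtain h | h := eq_or_ne (n • s) r
    · simp [h, mul_comm]
    · simp [h, h.symm]

/-- For every `n ≥ 1`, the Bost–Connes map `ρₙ` on `ℚ[ℚ/ℤ]` is injective. -/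
theorem BC.rho_injective (n : ℕ) (hn : 1 ≤ n) :
    Function.Injective (BC.rho n) := by
  have hn0 : n ≠ 0 := Nat.one_le_iff_ne_zero.mp hn
  intro f g hfg
  ext r
  obtain ⟨s, rfl⟩ := surjective_nsmul_of_divisibleBy_int (G := AddCircle (1 : ℚ)) hn0 r
  have hs := congr(($hfg).coeff s)
  rwa [BC.coeff_rho hn0, BC.coeff_rho hn0, mul_right_inj' (by positivity)] at hs
end

section
/- Let n ≥ 1 be an integer and let χ : A → ℂ be a ℚ-algebra homomorphism from the group algebra A = ℚ[ℚ/ℤ] to the complex numbers such that χ(e_{1/n}) = 1, where 1/n denotes the class of (n)⁻¹ ∈ ℚ in ℚ/ℤ. Then for every r ∈ ℚ/ℤ and every s ∈ ℚ/ℤ with n • s = r, one has χ(ρₙ(e_r)) = χ(e_s). -/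
open AddMonoidAlgebra

/-! The solutions of `n • t = r` in `ℚ/ℤ` are the `n` points `s + m/n` with `0 ≤ m < n`, and
`χ(e_{s + m/n}) = χ(e_s) χ(e_{1/n})^m = χ(e_s)`, so `χ(ρₙ(e_r))` is the average of `n` copies
of `χ(e_s)`. -/

namespace AddCircle

variable {𝕜 : Type*} [Field 𝕜] [LinearOrder 𝕜] [IsStrictOrderedRing 𝕜] {p : 𝕜} [Fact (0 < p)]

theorem setOf_nsmul_eq_eq_image {n : ℕ} (hn : 0 < n) {r s : AddCircle p} (hs : n • s = r) :
    {t : AddCircle p | n • t = r} =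
      (fun m : ℕ => s + m • ((p / n : 𝕜) : AddCircle p)) '' Set.Iio n := by
  ext t
  have hshift : n • t = r ↔ n • (t - s) = 0 := by rw [smul_sub, hs, sub_eq_zero]
  simp only [Set.mem_ofPred_eq, hshift, AddCircle.nsmul_eq_zero_iff hn, natCast_div_mul_eq_nsmul,
    Set.mem_image, Set.mem_Iio, eq_sub_iff_add_eq']

theorem finsum_nsmul_eq_eq_sum_range {M : Type*} [AddCommMonoid M] (f : AddCircle p → M) {n : ℕ}
    (hn : 0 < n) {r s : AddCircle p} (hs : n • s = r) :
    ∑ᶠ (t : AddCircle p) (_ : n • t = r), f t =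
      ∑ m ∈ Finset.range n, f (s + m • ((p / n : 𝕜) : AddCircle p)) := by
  have hinj : Set.InjOn (fun m : ℕ => s + m • ((p / n : 𝕜) : AddCircle p)) (Set.Iio n) := by
    have := nsmul_injOn_Iio_addOrderOf (x := ((p / n : 𝕜) : AddCircle p))
    rw [addOrderOf_period_div hn] at this
    exact (add_right_injective s).comp_injOn this
  rw [← finsum_mem_coe_finset, Finset.coe_range, ← finsum_mem_image hinj,
    ← setOf_nsmul_eq_eq_image hn hs]
  rfl

end AddCircle

namespace AddMonoidAlgebra

theorem algHom_single_add_nsmul {k G B : Type*} [CommSemiring k] [AddMonoid G] [Semiring B]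
    [Algebra k B] (χ : AddMonoidAlgebra k G →ₐ[k] B) {x : G} (hx : χ (single x 1) = 1) (s : G)
    (m : ℕ) : χ (single (s + m • x) 1) = χ (single s 1) := by
  have : single (s + m • x) (1 : k) = single s 1 * single x 1 ^ m := by
    rw [single_pow, single_mul_single, one_pow, mul_one]
  rw [this, map_mul, map_pow, hx, one_pow, mul_one]

end AddMonoidAlgebra

theorem BC.rho_single_s10 (n : ℕ) (r : AddCircle (1 : ℚ)) :
    BC.rho n (single r 1) = (n : ℚ)⁻¹ • ∑ᶠ (t) (_ : n • t = r), single t (1 : ℚ) := by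
  simp [BC.rho]

/-- For `n ≥ 1` and a `ℚ`-algebra homomorphism `χ : ℚ[ℚ/ℤ] → ℂ` with
`χ(e_{1/n}) = 1` (where `1/n` is the class of `n⁻¹ ∈ ℚ` in `ℚ/ℤ`), one has
`χ(ρₙ(e_r)) = χ(e_s)` for every `r` and every `s` with `n • s = r`. -/
theorem BC.comp_rho_eq (n : ℕ) (hn : 1 ≤ n) (χ : BC.A →ₐ[ℚ] ℂ)
    (hχ : χ (AddMonoidAlgebra.single ((((n : ℚ)⁻¹ : ℚ) : AddCircle (1 : ℚ))) (1 : ℚ)) = 1)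
    (r s : AddCircle (1 : ℚ)) (hs : n • s = r) :
    χ (BC.rho n (AddMonoidAlgebra.single r (1 : ℚ))) =
      χ (AddMonoidAlgebra.single s (1 : ℚ)) := by
  rw [← one_div] at hχ
  rw [BC.rho_single_s10, AddCircle.finsum_nsmul_eq_eq_sum_range _ hn hs, map_smul, map_sum]
  simp only [AddMonoidAlgebra.algHom_single_add_nsmul χ hχ, Finset.sum_const, Finset.card_range]
  rw [← Nat.cast_smul_eq_nsmul ℚ, smul_smul, inv_mul_cancel₀ (by positivity), one_smul]
end

section
/- Let k be a commutative ring, A a commutative k-algebra, B a k-algebra, ι : A → B a k-algebra homomorphism, S a commutative monoid, and ρ : S → End_{k-alg}(A) a monoid homomorphism to algebra endomorphisms of A. Suppose u, v : S → B satisfy, for all s, t ∈ S and a ∈ A: v(s)·u(s) = 1, u(s)·v(s) = ι(ρ(s)(1)), u(s·t) = u(s)·u(t), v(s·t) = v(t)·v(s), u(s)·ι(a) = ι(ρ(s)(a))·u(s), and ι(a)·v(s) = v(s)·ι(ρ(s)(a)). Then the k-submodule of B spanned by the monomials v(s)·ι(a)·u(t), for s, t ∈ S and a ∈ A, is closed under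 multiplication and contains 1; i.e. it is a k-subalgebra of B (the crossed product A ⋊ S is the linear span of the monomials U*_{ρ₁} a U_{ρ₂}). -/
/-- The crossed product `A ⋊ S` is the linear span of the monomials
`U_{ρ₁}^* a U_{ρ₂}`: under the crossed-product relations, the `k`-submodule of `B`
spanned by the elements `v s * ι a * u t` (for `s, t ∈ S`, `a ∈ A`) contains `1`
and is closed under multiplication, i.e. it is a `k`-subalgebra of `B`. -/
theorem crossedProduct_span_monomials (k : Type*) [CommRing k]
    (A : Type*) [CommRing A] [Algebra k A]
    (B : Type*) [Ring B] [Algebra k B] (ι : A →ₐ[k] B)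
    (S : Type*) [CommMonoid S] (ρ : S →* (A →ₐ[k] A))
    (u v : S → B)
    (h1 : ∀ s, v s * u s = 1)
    (h2 : ∀ s, u s * v s = ι (ρ s 1))
    (h3 : ∀ s t, u (s * t) = u s * u t)
    (h4 : ∀ s t, v (s * t) = v t * v s)
    (h5 : ∀ s a, u s * ι a = ι (ρ s a) * u s)
    (h6 : ∀ s a, ι a * v s = v s * ι (ρ s a)) :
    (1 : B) ∈ Submodule.span k {x : B | ∃ s t : S, ∃ a : A, x = v s * ι a * u t} ∧
    ∀ x ∈ Submodule.span k {x : B | ∃ s t : S, ∃ a : A, x = v s * ι a * u t},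
      ∀ y ∈ Submodule.span k {x : B | ∃ s t : S, ∃ a : A, x = v s * ι a * u t},
        x * y ∈ Submodule.span k {x : B | ∃ s t : S, ∃ a : A, x = v s * ι a * u t} := by
  have key : ∀ t s' : S, u t * v s' = v s' * ι (ρ t (ρ s' 1)) * u t := by
    intro t s'
    calc u t * v s' = (v s' * u s') * (u t * v s') := by rw [h1, one_mul]
      _ = v s' * ((u s' * u t) * v s') := by simp only [mul_assoc]
      _ = v s' * (u (s' * t) * v s') := by rw [h3]
      _ = v s' * (u (t * s') * v s') := by rw [mul_comm s' t]
      _ = v s' * (u t * (u s' * v s')) := by rw [h3, mul_assoc]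
      _ = v s' * (u t * ι (ρ s' 1)) := by rw [h2]
      _ = v s' * (ι (ρ t (ρ s' 1)) * u t) := by rw [h5]
      _ = v s' * ι (ρ t (ρ s' 1)) * u t := by rw [mul_assoc]
  have genmul : ∀ (s t s' t' : S) (a a' : A),
      (v s * ι a * u t) * (v s' * ι a' * u t') =
        v (s' * s) * ι (ρ s' a * ρ t (ρ s' 1) * ρ t a') * u (t * t') := by
    intro s t s' t' a a'
    calc (v s * ι a * u t) * (v s' * ι a' * u t')
        = v s * (ι a * ((u t * v s') * (ι a' * u t'))) := by simp only [mul_assoc]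
      _ = v s * (ι a * (v s' * ι (ρ t (ρ s' 1)) * u t * (ι a' * u t'))) := by rw [key]
      _ = v s * ((ι a * v s') * (ι (ρ t (ρ s' 1)) * ((u t * ι a') * u t'))) := by
            simp only [mul_assoc]
      _ = v s * ((v s' * ι (ρ s' a)) * (ι (ρ t (ρ s' 1)) * ((ι (ρ t a') * u t) * u t'))) := by
            rw [h6, h5]
      _ = (v s * v s') * (ι (ρ s' a) * ι (ρ t (ρ s' 1)) * ι (ρ t a')) * (u t * u t') := by
            simp only [mul_assoc]
      _ = v (s' * s) * ι (ρ s' a * ρ t (ρ s' 1) * ρ t a') * u (t * t') := by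
            rw [← h4, ← h3, map_mul, map_mul]
  refine ⟨Submodule.subset_span ⟨1, 1, 1, by rw [map_one, mul_one, h1]⟩, ?_⟩
  intro x hx y hy
  induction hx using Submodule.span_induction with
  | mem x hxg =>
    induction hy using Submodule.span_induction with
    | mem y hyg =>
      obtain ⟨s, t, a, rfl⟩ := hxg
      obtain ⟨s', t', a', rfl⟩ := hyg
      exact Submodule.subset_span
        ⟨s' * s, t * t', ρ s' a * ρ t (ρ s' 1) * ρ t a', genmul s t s' t' a a'⟩
    | zero => simp
    | add y1 y2 _ _ ih1 ih2 => rw [mul_add]; exact add_mem ih1 ih2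
    | smul c y _ ih => rw [mul_smul_comm]; exact Submodule.smul_mem _ _ ih
  | zero => simp
  | add x1 x2 _ _ ih1 ih2 => rw [add_mul]; exact add_mem ih1 ih2
  | smul c x _ ih => rw [smul_mul_assoc]; exact Submodule.smul_mem _ _ ih
end

section
/- Let k be a field, let k′ be a commutative k-algebra that is isomorphic as a k-algebra to a finite product of finite separable field extensions of k, and let Ω be an algebraically closed field extension of k. Then there is an Ω-algebra isomorphism k′ ⊗_k Ω ≅ Ω^d, where d = dim_k k′ is the k-dimension of k′ (property (1) of étale finite k-schemes: k′ ⊗ k̄ ≅ k̄^{[k′:k]}). -/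
open TensorProduct Module

noncomputable section AuxEtale

variable {R A : Type*} [CommSemiring R] [Semiring A] [Algebra R A]

/-- Reindexing a function algebra along an equivalence of index types. -/
def algEquivFunCongr {α β : Type*} (e : α ≃ β) : (α → A) ≃ₐ[R] (β → A) where
  toFun f := f ∘ e.symm
  invFun g := g ∘ e
  left_inv f := by ext x; simp
  right_inv g := by ext x; simp
  map_mul' f g := rfl
  map_add' f g := rfl
  commutes' r := rfl

/-- Uncurrying a pi of function algebras into a function algebra over a sigma type. -/
def algEquivSigmaCurry {ι : Type*} {γ : ι → Type*} :
    (∀ i, γ i → A) ≃ₐ[R] ((Σ i, γ i) → A) where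
  toFun f p := f p.1 p.2
  invFun g i j := g ⟨i, j⟩
  left_inv f := rfl
  right_inv g := by ext ⟨i, j⟩; rfl
  map_mul' f g := rfl
  map_add' f g := rfl
  commutes' r := rfl

theorem fieldTensorEquivAlgHomPi (k K Ω : Type*) [Field k] [Field K] [Algebra k K]
    [FiniteDimensional k K] [Algebra.IsSeparable k K]
    [Field Ω] [Algebra k Ω] [IsAlgClosed Ω] :
    Nonempty ((Ω ⊗[k] K) ≃ₐ[Ω] ((K →ₐ[k] Ω) → Ω)) := by
  classical
  let f : (K →ₐ[k] Ω) → ((Ω ⊗[k] K) →ₐ[Ω] Ω) := fun σ =>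
    Algebra.TensorProduct.lift (AlgHom.id Ω Ω) σ fun _ _ => Commute.all _ _
  have hf : ∀ σ x, f σ ((1 : Ω) ⊗ₜ x) = σ x := by
    intro σ x
    simp [f]
  have hfinj : Function.Injective f := by
    intro σ τ h
    ext x
    rw [← hf σ x, ← hf τ x, h]
  have li : LinearIndependent Ω fun σ : K →ₐ[k] Ω => (f σ).toLinearMap :=
    (linearIndependent_algHom_toLinearMap Ω (Ω ⊗[k] K) Ω).comp f hfinj
  let φ : (Ω ⊗[k] K) →ₐ[Ω] ((K →ₐ[k] Ω) → Ω) := Pi.algHom _ _ f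
  have hφ : ∀ v σ, φ v σ = f σ v := fun _ _ => rfl
  have hsurj : Function.Surjective φ.toLinearMap := by
    rw [← LinearMap.dualMap_injective_iff, ← LinearMap.ker_eq_bot, LinearMap.ker_eq_bot']
    intro ψ hψ
    have hψ' : ∀ v, ψ (φ v) = 0 := by
      intro v
      have := DFunLike.congr_fun hψ v
      simpa [LinearMap.dualMap_apply] using this
    set c : (K →ₐ[k] Ω) → Ω := fun σ => ψ (fun j => if σ = j then 1 else 0) with hc
    have hzero : ∑ σ : K →ₐ[k] Ω, c σ • (f σ).toLinearMap = 0 := by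
      refine LinearMap.ext fun v => ?_
      have h1 := ψ.pi_apply_eq_sum_univ (φ v)
      rw [hψ' v] at h1
      simp only [LinearMap.sum_apply, LinearMap.smul_apply, AlgHom.toLinearMap_apply,
        LinearMap.zero_apply, smul_eq_mul]
      calc ∑ σ : K →ₐ[k] Ω, c σ * (f σ) v
          = ∑ σ : K →ₐ[k] Ω, φ v σ • c σ :=
            Finset.sum_congr rfl fun σ _ => by rw [hφ v σ, smul_eq_mul, mul_comm]
        _ = 0 := h1.symm
    have hcz : ∀ σ, c σ = 0 := Fintype.linearIndependent_iff.mp li c hzero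
    refine LinearMap.ext fun g => ?_
    rw [LinearMap.zero_apply, ψ.pi_apply_eq_sum_univ g]
    exact Finset.sum_eq_zero fun i _ => by
      rw [show (ψ fun j => if i = j then 1 else 0) = c i from rfl, hcz, smul_zero]
  have hdim : finrank Ω (Ω ⊗[k] K) = finrank Ω ((K →ₐ[k] Ω) → Ω) := by
    rw [Module.finrank_baseChange, Module.finrank_pi, AlgHom.card]
  have hinj : Function.Injective φ.toLinearMap :=
    (LinearMap.injective_iff_surjective_of_finrank_eq_finrank hdim).mpr hsurj
  exact ⟨AlgEquiv.ofBijective φ ⟨hinj, hsurj⟩⟩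

theorem fieldTensorEquivFin (k K Ω : Type*) [Field k] [Field K] [Algebra k K]
    [FiniteDimensional k K] [Algebra.IsSeparable k K]
    [Field Ω] [Algebra k Ω] [IsAlgClosed Ω] :
    Nonempty ((Ω ⊗[k] K) ≃ₐ[Ω] (Fin (finrank k K) → Ω)) := by
  obtain ⟨e⟩ := fieldTensorEquivAlgHomPi k K Ω
  exact ⟨e.trans (algEquivFunCongr (Fintype.equivFinOfCardEq (AlgHom.card k K Ω)))⟩

end AuxEtale

/-- Data exhibiting a commutative `k`-algebra `k'` as (isomorphic to) a finite
product of finite separable field extensions of `k`, i.e. as an étale finite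
`k`-algebra. -/
structure EtaleProductData (k : Type*) [Field k] (k' : Type*) [CommRing k']
    [Algebra k k'] where
  /-- the (finite) index type of the product -/
  ι : Type
  [finι : Fintype ι]
  /-- the factors -/
  K : ι → Type
  [fld : ∀ i, Field (K i)]
  [alg : ∀ i, Algebra k (K i)]
  [fd : ∀ i, FiniteDimensional k (K i)]
  [sep : ∀ i, Algebra.IsSeparable k (K i)]
  /-- the `k`-algebra isomorphism of `k'` with the product of the factors -/
  equiv : k' ≃ₐ[k] ((i : ι) → K i)

/-- If `k'` is a commutative `k`-algebra isomorphic to a finite product of finite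
separable field extensions of `k`, and `Ω` is an algebraically closed extension of
`k`, then `k' ⊗_k Ω ≅ Ω^d` as `Ω`-algebras, where `d = dim_k k'` (property (1) of
étale finite `k`-schemes: `k' ⊗ k̄ ≅ k̄^{[k' : k]}`). -/
theorem etale_baseChange_algClosed (k : Type) [Field k] (k' : Type) [CommRing k']
    [Algebra k k'] (h : Nonempty (EtaleProductData k k'))
    (Ω : Type) [Field Ω] [Algebra k Ω] [IsAlgClosed Ω] :
    Nonempty ((TensorProduct k Ω k') ≃ₐ[Ω] (Fin (Module.finrank k k') → Ω)) := by
  classical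
  obtain ⟨d⟩ := h
  letI := d.finι
  letI := d.fld
  letI := d.alg
  letI := d.fd
  letI := d.sep
  have E : ∀ i, Nonempty ((Ω ⊗[k] d.K i) ≃ₐ[Ω] (Fin (Module.finrank k (d.K i)) → Ω)) :=
    fun i => fieldTensorEquivFin k (d.K i) Ω
  let e := fun i => Classical.choice (E i)
  let e1 : (Ω ⊗[k] k') ≃ₐ[Ω] (Ω ⊗[k] (∀ i, d.K i)) :=
    Algebra.TensorProduct.congr AlgEquiv.refl d.equiv
  let e2 := Algebra.TensorProduct.piRight k Ω Ω d.K
  let e3 : (∀ i, Ω ⊗[k] d.K i) ≃ₐ[Ω] (∀ i, Fin (Module.finrank k (d.K i)) → Ω) :=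
    AlgEquiv.piCongrRight e
  let e4 : (∀ i, Fin (Module.finrank k (d.K i)) → Ω) ≃ₐ[Ω]
      ((Σ i, Fin (Module.finrank k (d.K i))) → Ω) := algEquivSigmaCurry
  have hcard : Fintype.card (Σ i, Fin (Module.finrank k (d.K i)))
      = Module.finrank k k' := by
    rw [Fintype.card_sigma]
    simp only [Fintype.card_fin]
    rw [← Module.finrank_pi_fintype k]
    exact (d.equiv.toLinearEquiv.finrank_eq).symm
  let e5 : ((Σ i, Fin (Module.finrank k (d.K i))) → Ω) ≃ₐ[Ω]
      (Fin (Module.finrank k k') → Ω) :=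
    algEquivFunCongr (Fintype.equivFinOfCardEq hcard)
  exact ⟨e1.trans (e2.trans (e3.trans (e4.trans e5)))⟩
end

section
/- Let k be a field, let k′ be a commutative k-algebra that is isomorphic as a k-algebra to a finite product of finite separable field extensions of k, and let Ω be an algebraically closed field extension of k. Then the number of k-algebra homomorphisms k′ → Ω equals dim_k k′ (property (3) of étale finite k-schemes: |X(k̄)| = [k′ : k]). -/
section aux

variable {k : Type} [Field k] {ι : Type} [Fintype ι] [DecidableEq ι]
  {K : ι → Type} [∀ i, Field (K i)] [∀ i, Algebra k (K i)]
  {Ω : Type} [Field Ω] [Algebra k Ω]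

lemma pi_aux_idem (f : ((i : ι) → K i) →ₐ[k] Ω) (j : ι) :
    f (Pi.single j 1) = 0 ∨ f (Pi.single j 1) = 1 := by
  have h : f (Pi.single j 1) * f (Pi.single j 1) = f (Pi.single j 1) := by
    rw [← map_mul, ← Pi.single_mul, one_mul]
  rcases eq_or_ne (f (Pi.single j 1)) 0 with h0 | h0
  · exact Or.inl h0
  · exact Or.inr (by field_simp at h; exact h)

lemma pi_aux_exists_one (f : ((i : ι) → K i) →ₐ[k] Ω) :
    ∃ i : ι, f (Pi.single i 1) = 1 := by
  by_contra hc
  push_neg at hc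
  have h1 : f 1 = 1 := map_one f
  have hsum : (1 : (i : ι) → K i) = ∑ i : ι, Pi.single i 1 := by
    funext j
    simp [Finset.sum_apply, Pi.single_apply]
  rw [hsum, map_sum] at h1
  have : ∀ i : ι, f (Pi.single i 1) = 0 := fun i =>
    (pi_aux_idem f i).resolve_right (hc i)
  simp [this] at h1

lemma pi_aux_zero_of_ne (f : ((i : ι) → K i) →ₐ[k] Ω) {i j : ι}
    (hi : f (Pi.single i 1) = 1) (hij : j ≠ i) : f (Pi.single j 1) = 0 := by
  have h : f (Pi.single j 1) * f (Pi.single i 1) = 0 := by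
    rw [← map_mul]
    have : (Pi.single j 1 * Pi.single i 1 : (i : ι) → K i) = 0 := by
      funext l
      by_cases hl : l = j <;> by_cases hl' : l = i <;>
        simp_all [Pi.single_apply]
    rw [this, map_zero]
  rwa [hi, mul_one] at h

/-- Any `k`-algebra hom from a finite product of fields to a field factors through
one of the projections. -/
lemma pi_aux_factor (f : ((i : ι) → K i) →ₐ[k] Ω) :
    ∃ p : Σ i : ι, (K i →ₐ[k] Ω), f = p.2.comp (Pi.evalAlgHom k K p.1) := by
  obtain ⟨i, hi⟩ := pi_aux_exists_one f
  refine ⟨⟨i,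
    { toFun := fun a => f (Pi.single i a)
      map_one' := hi
      map_mul' := fun a b => by
        show f (Pi.single i (a * b)) = f (Pi.single i a) * f (Pi.single i b)
        rw [Pi.single_mul, map_mul]
      map_zero' := by simp
      map_add' := fun a b => by
        show f (Pi.single i (a + b)) = f (Pi.single i a) + f (Pi.single i b)
        rw [Pi.single_add, map_add]
      commutes' := fun r => by
        show f (Pi.single i (algebraMap k (K i) r)) = algebraMap k Ω r
        have hs : (Pi.single i (algebraMap k (K i) r) : (i : ι) → K i)
            = algebraMap k _ r * Pi.single i 1 := by
          have := Pi.single_mul_right (f := algebraMap k ((i : ι) → K i) r) (i := i)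
            (1 : K i)
          simpa using this
        rw [hs, map_mul, AlgHom.commutes, hi, mul_one] }⟩, ?_⟩
  ext x
  have hx : x = ∑ j : ι, Pi.single j (x j) := by
    funext l
    simp [Finset.sum_apply, Pi.single_apply]
  conv_lhs => rw [hx]
  rw [map_sum]
  rw [Finset.sum_eq_single i]
  · rfl
  · intro j _ hj
    have h0 : f (Pi.single j (x j)) = f (Pi.single j (x j)) * f (Pi.single j 1) := by
      rw [← map_mul, ← Pi.single_mul, mul_one]
    rw [h0, pi_aux_zero_of_ne f hi hj, mul_zero]
  · intro h; exact absurd (Finset.mem_univ i) h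

lemma pi_aux_bij :
    Function.Bijective
      (fun p : Σ i : ι, (K i →ₐ[k] Ω) => p.2.comp (Pi.evalAlgHom k K p.1)) := by
  constructor
  · rintro ⟨i, g⟩ ⟨i', g'⟩ h
    have hii' : i = i' := by
      by_contra hne
      have := congrArg (fun F => F (Pi.single i 1)) h
      simp only [AlgHom.comp_apply, Pi.evalAlgHom_apply] at this
      rw [Pi.single_eq_same, map_one, Pi.single_eq_of_ne (Ne.symm hne), map_zero] at this
      exact one_ne_zero this
    subst hii'
    have hg : g = g' := by
      ext a
      have := congrArg (fun F => F (Pi.single i a)) h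
      simpa using this
    rw [hg]
  · intro f
    obtain ⟨p, hp⟩ := pi_aux_factor f
    exact ⟨p, hp.symm⟩

end aux

/-- If `k'` is a commutative `k`-algebra isomorphic to a finite product of finite
separable field extensions of `k`, and `Ω` is an algebraically closed extension of
`k`, then the number of `k`-algebra homomorphisms `k' → Ω` equals `dim_k k'`
(property (3) of étale finite `k`-schemes: `|X(k̄)| = [k' : k]`). -/
theorem etale_card_algHom_algClosed (k : Type) [Field k] (k' : Type) [CommRing k']
    [Algebra k k'] (h : Nonempty (EtaleProductData k k'))
    (Ω : Type) [Field Ω] [Algebra k Ω] [IsAlgClosed Ω] :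
    Nat.card (k' →ₐ[k] Ω) = Module.finrank k k' := by
  classical
  obtain ⟨⟨ι, K, e⟩⟩ := h
  rename_i finι fld alg fd sep
  -- transfer along the algebra isomorphism
  have e1 : (k' →ₐ[k] Ω) ≃ (((i : ι) → K i) →ₐ[k] Ω) :=
    { toFun := fun f => f.comp e.symm.toAlgHom
      invFun := fun f => f.comp e.toAlgHom
      left_inv := fun f => by ext x; simp
      right_inv := fun f => by ext x; simp }
  have e2 : (Σ i : ι, (K i →ₐ[k] Ω)) ≃ (((i : ι) → K i) →ₐ[k] Ω) :=
    Equiv.ofBijective _ pi_aux_bij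
  rw [Nat.card_congr (e1.trans e2.symm)]
  have hrank : Module.finrank k k' = Module.finrank k ((i : ι) → K i) :=
    e.toLinearEquiv.finrank_eq
  rw [hrank, Module.finrank_pi_fintype, Nat.card_eq_fintype_card, Fintype.card_sigma]
  exact Finset.sum_congr rfl fun i _ => AlgHom.card k (K i) Ω
end
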